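/- Let F(x) and G(x) be formal power series satisfying -1 + G(x) = x/(1 - x·F(x)). Then for every n ≥ 2, H_n(-1+G) = -H^{(2)}_{n-2}(F). -/

import Mathlib

/-!
Write `g = G - 1` and `f = F`, so that `g = X + X F g`, i.e. `g₀ = 0` and
`g_{u+1} = [u = 0] + ∑_{t ≤ u} f_t g_{u-t}`. Subtracting `∑_{t<j} f_{j-1-t}` times column `t`
from column `j` of the Hankel matrix `(g_{i+j})` is a unitriangular column operation, and by the
recurrence it leaves the entries `[i + j = 1] + ∑_{s<i} f_{j+s} g_{i-1-s}`. Since `g₀ = 0` and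
`g₁ = 1`, this matrix is block lower triangular: its first two rows are `e₁, e₀`, and its lower
right block is `(g_{p+1-s})_{p,s} · (f_{2+s+q})_{s,q}`, a unitriangular Toeplitz matrix times the
Hankel matrix of `H^{(2)}_{n-2}(F)`. The antidiagonal `2 × 2` block contributes the sign.
-/

open PowerSeries

/-- The shifted Hankel determinant `H^{(k)}_n(F)`. -/
noncomputable def hankel {R : Type*} [CommRing R] (k n : ℕ) (F : PowerSeries R) : R :=
  Matrix.det (Matrix.of fun i j : Fin n => PowerSeries.coeff (k + (i : ℕ) + (j : ℕ)) F)

open Finset Matrix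

section HankelReduction

variable {R : Type*} [CommRing R]

section Recurrence

variable {F g : R⟦X⟧}

theorem coeff_zero_of_mul_one_sub_X_mul (hg : g * (1 - X * F) = X) : coeff 0 g = 0 := by
  rw [show g = X + X * (F * g) by linear_combination hg]
  simp

theorem coeff_succ_of_mul_one_sub_X_mul (hg : g * (1 - X * F) = X) (u : ℕ) :
    coeff (u + 1) g =
      (if u = 0 then 1 else 0) + ∑ t ∈ range (u + 1), coeff t F * coeff (u - t) g := by
  conv_lhs => rw [show g = X + X * (F * g) by linear_combination hg]
  rw [map_add, coeff_succ_X_mul, coeff_X, coeff_mul, Nat.sum_antidiagonal_eq_sum_range_succ_mk]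
  simp

theorem coeff_one_of_mul_one_sub_X_mul (hg : g * (1 - X * F) = X) : coeff 1 g = 1 := by
  simp [coeff_succ_of_mul_one_sub_X_mul hg 0, coeff_zero_of_mul_one_sub_X_mul hg]

theorem coeff_add_sub_sum_of_mul_one_sub_X_mul (hg : g * (1 - X * F) = X) (i j : ℕ) :
    coeff (i + j) g - ∑ t ∈ range j, coeff (j - 1 - t) F * coeff (i + t) g =
      (if i + j = 1 then 1 else 0) + ∑ s ∈ range i, coeff (j + s) F * coeff (i - 1 - s) g := by
  obtain ⟨u, hu⟩ | hij : (∃ u, i + j = u + 1) ∨ i + j = 0 := by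
    rcases i + j with _ | u <;> simp
  · have hsplit : ∑ t ∈ range (u + 1), coeff t F * coeff (u - t) g =
        ∑ t ∈ range j, coeff (j - 1 - t) F * coeff (i + t) g +
          ∑ s ∈ range i, coeff (j + s) F * coeff (i - 1 - s) g := by
      rw [show u + 1 = j + i by omega, sum_range_add,
        ← sum_range_reflect (fun t ↦ coeff t F * coeff (u - t) g) j]
      congr 1 <;> refine sum_congr rfl fun t ht ↦ ?_ <;> rw [mem_range] at ht
      · rw [show u - (j - 1 - t) = i + t by omega]
      · rw [show u - (j + t) = i - 1 - t by omega]
    rw [hu, coeff_succ_of_mul_one_sub_X_mul hg, hsplit]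
    simp only [add_eq_right]
    ring
  · obtain ⟨rfl, rfl⟩ : i = 0 ∧ j = 0 := by omega
    simp [coeff_zero_of_mul_one_sub_X_mul hg]

end Recurrence

def strictUpperToeplitz (c : ℕ → R) (n : ℕ) : Matrix (Fin n) (Fin n) R :=
  of fun t j ↦ if t < j then c (j - 1 - t) else 0

theorem det_one_sub_strictUpperToeplitz (c : ℕ → R) (n : ℕ) :
    det (1 - strictUpperToeplitz c n) = 1 := by
  rw [det_of_isUpperTriangular]
  · simp [strictUpperToeplitz]
  · intro i j hij
    simp [strictUpperToeplitz, (show j < i from hij).ne', (show j < i from hij).not_gt]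

theorem hankel_mul_strictUpperToeplitz_apply (a c : ℕ → R) {n : ℕ} (i j : Fin n) :
    ((of fun i j : Fin n ↦ a (i + j)) * strictUpperToeplitz c n) i j =
      ∑ t ∈ range j, c (j - 1 - t) * a (i + t) := by
  have hfilter : (range n).filter (· < (j : ℕ)) = range j := by
    ext t; simp only [mem_filter, mem_range]; omega
  simp only [mul_apply, of_apply, strictUpperToeplitz, Fin.lt_def, mul_ite, mul_zero]
  rw [Fin.sum_univ_eq_sum_range (fun t ↦ if t < (j : ℕ) then a (i + t) * c (j - 1 - t) else 0),
    ← sum_filter, hfilter]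
  simp only [mul_comm]

theorem det_lowerToeplitz_eq_one {g : ℕ → R} (hg0 : g 0 = 0) (hg1 : g 1 = 1) (m : ℕ) :
    det (of fun p s : Fin m ↦ g (p + 1 - s)) = 1 := by
  rw [det_of_isLowerTriangular]
  · simp [hg1]
  · intro p s hps
    have : (p : ℕ) < s := (show p < s from hps)
    simp [show (p : ℕ) + 1 - s = 0 by omega, hg0]

theorem sum_range_mul_lowerToeplitz_eq_sum_fin {g : ℕ → R} (hg0 : g 0 = 0) {m : ℕ} (p : Fin m)
    (a : ℕ → R) :
    ∑ s ∈ range (p + 2), a s * g (p + 1 - s) = ∑ s : Fin m, g (p + 1 - s) * a s := by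
  rw [Fin.sum_univ_eq_sum_range (fun s ↦ g (p + 1 - s) * a s), sum_range_succ,
    ← sum_subset (range_subset_range.2 p.isLt)]
  · simp [hg0, mul_comm]
  · intro s _ hs
    simp [show (p : ℕ) + 1 - s = 0 by simp at hs; omega, hg0]

theorem det_antidiagonal_add_sum {f g : ℕ → R} (hg0 : g 0 = 0) (hg1 : g 1 = 1) (m : ℕ) :
    det (of fun i j : Fin (2 + m) ↦
        (if (i : ℕ) + j = 1 then 1 else 0) + ∑ s ∈ range i, f (j + s) * g (i - 1 - s)) =
      -det (of fun p q : Fin m ↦ f (2 + p + q)) := by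
  set M := reindex finSumFinEquiv.symm finSumFinEquiv.symm (of fun i j : Fin (2 + m) ↦
    (if (i : ℕ) + j = 1 then 1 else 0) + ∑ s ∈ range i, f (j + s) * g (i - 1 - s)) with hM
  have h11 : M.toBlocks₁₁ = !![0, 1; 1, 0] := by
    ext i j
    fin_cases i <;> fin_cases j <;> simp [hM, toBlocks₁₁, hg0]
  have h12 : M.toBlocks₁₂ = 0 := by
    ext i j
    fin_cases i <;> simp [hM, toBlocks₁₂, hg0]
    omega
  have h22 : M.toBlocks₂₂ =
      (of fun p s : Fin m ↦ g (p + 1 - s)) * of fun p q : Fin m ↦ f (2 + p + q) := by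
    ext p q
    simp only [hM, toBlocks₂₂, mul_apply, reindex_apply, submatrix_apply, of_apply,
      Equiv.symm_symm, finSumFinEquiv_apply_right, Fin.val_natAdd]
    rw [if_neg (by omega), zero_add, show 2 + (p : ℕ) = p + 2 by omega]
    refine Eq.trans (sum_congr rfl fun s _ ↦ ?_)
      (sum_range_mul_lowerToeplitz_eq_sum_fin hg0 p fun s ↦ f (2 + s + q))
    rw [add_right_comm 2 (q : ℕ), show (p : ℕ) + 2 - 1 - s = p + 1 - s by omega]
  rw [← det_reindex_self finSumFinEquiv.symm, ← hM, ← fromBlocks_toBlocks M, h12,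
    det_fromBlocks_zero₁₂, h11, h22, det_mul, det_lowerToeplitz_eq_one hg0 hg1, det_fin_two_of]
  ring

end HankelReduction

theorem stmt5 {R : Type*} [CommRing R] (F G : PowerSeries R)
    (hG : (G - 1) * (1 - PowerSeries.X * F) = PowerSeries.X) (n : ℕ) (hn : 2 ≤ n) :
    hankel 0 n (G - 1) = - hankel 2 (n - 2) F := by
  obtain ⟨m, rfl⟩ : ∃ m, n = 2 + m := ⟨n - 2, by omega⟩
  calc hankel 0 (2 + m) (G - 1)
      = det ((of fun i j : Fin (2 + m) ↦ coeff (i + j) (G - 1)) *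
          (1 - strictUpperToeplitz (coeff · F) (2 + m))) := by
        rw [det_mul, det_one_sub_strictUpperToeplitz, mul_one, hankel]
        simp only [zero_add]
    _ = det (of fun i j : Fin (2 + m) ↦ (if (i : ℕ) + j = 1 then 1 else 0) +
          ∑ s ∈ range i, coeff (j + s) F * coeff (i - 1 - s) (G - 1)) := by
        congr 1
        ext i j
        rw [mul_sub, mul_one, Matrix.sub_apply,
          hankel_mul_strictUpperToeplitz_apply (coeff · (G - 1)) (coeff · F), of_apply, of_apply,
          coeff_add_sub_sum_of_mul_one_sub_X_mul hG]
    _ = -det (of fun p q : Fin m ↦ coeff (2 + p + q) F) :=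
        det_antidiagonal_add_sum (f := (coeff · F)) (g := (coeff · (G - 1)))
          (coeff_zero_of_mul_one_sub_X_mul hG) (coeff_one_of_mul_one_sub_X_mul hG) m
    _ = -hankel 2 (2 + m - 2) F := by rw [Nat.add_sub_cancel_left, hankel]
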